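/- Suppose x, y in (0,1), and normalized confusion matrices for two groups satisfy predictive parity (TPa·FPb = TPb·FPa), predictive equality (FNa·TNb = FNb·TNa), and overall accuracy equality (TPa+TNa = TPb+TNb), with y·TNa ≠ x·TNb. Then TNb satisfies the quadratic equation (1-2x)·TNb² + (xy - y + x + 2y·TNa - x² + 2x·TNa - 2TNa)·TNb + (xy - x + TNa - 2y·TNa + y - y²)·TNa = 0. -/
import Mathlib

theorem stmt
    (x y TPa FNa TNa FPa TPb FNb TNb FPb : ℝ)
    (hx0 : 0 < x) (hx1 : x < 1) (hy0 : 0 < y) (hy1 : y < 1)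
    (hTPa : 0 ≤ TPa) (hFNa : 0 ≤ FNa) (hTNa : 0 ≤ TNa) (hFPa : 0 ≤ FPa)
    (hTPb : 0 ≤ TPb) (hFNb : 0 ≤ FNb) (hTNb : 0 ≤ TNb) (hFPb : 0 ≤ FPb)
    (hra : TPa + FNa = 1 - x) (hra' : TNa + FPa = x)
    (hrb : TPb + FNb = 1 - y) (hrb' : TNb + FPb = y)
    (hpp : TPa * FPb = TPb * FPa)
    (hpe : FNa * TNb = FNb * TNa)
    (hoae : TPa + TNa = TPb + TNb)
    (hnd : y * TNa ≠ x * TNb)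
    : (1 - 2*x) * TNb^2 + (x*y - y + x + 2*y*TNa - x^2 + 2*x*TNa - 2*TNa) * TNb + (x*y - x + TNa - 2*y*TNa + y - y^2) * TNa = 0 := by
  have hFPa' : FPa = x - TNa := by linarith
  have hFPb' : FPb = y - TNb := by linarith
  have hTPa' : TPa = 1 - x - FNa := by linarith
  have hTPb' : TPb = 1 - y - FNb := by linarith
  subst hFPa' hFPb' hTPa' hTPb'
  have h3 : FNb = FNa + x - y + TNb - TNa := by linarith
  have e1 : (1 - x - FNa) * (y - x + TNa - TNb) = (TNa - TNb) * (x - TNa) := by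
    linear_combination hpp - (x - TNa) * h3
  have e2 : FNa * (TNb - TNa) + TNa * (y - x + TNa - TNb) = 0 := by
    linear_combination hpe + TNa * h3
  linear_combination (-(TNb - TNa)) * e1 - (y - x + TNa - TNb) * e2
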